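/- arXiv:1802.09032 — 2 statements merged into one kernel-verified Lean document; each statement's English description precedes it below -/
import Mathlib

section
/- In any group G, if g is a right n-Engel element (i.e., [g,ₙ x] = 1 for all x ∈ G with n fixed), then g⁻¹ is a left (n+1)-Engel element; in particular bounded right Engel elements have inverses that are bounded left Engel elements. -/
/-- Iterated (Engel) commutator: `engel x g n` is `[x,ₙ g]`, with `engel x g 0 = x`. -/
def engel {G : Type*} [Group G] (x g : G) : ℕ → G
  | 0 => x
  | n + 1 => (engel x g n)⁻¹ * g⁻¹ * engel x g n * g

lemma engel_succ_eq {G : Type*} [Group G] (x g : G) (n : ℕ) :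
    engel x g (n + 1) = engel (x⁻¹ * g⁻¹ * x * g) g n := by
  induction n with
  | zero => rfl
  | succ n ih => rw [engel, ih, engel]

lemma engel_conj {G : Type*} [Group G] (x c h : G) (k : ℕ) :
    engel (h⁻¹ * x * h) (h⁻¹ * c * h) k = h⁻¹ * engel x c k * h := by
  induction k with
  | zero => rfl
  | succ k ih => rw [engel, ih, engel]; group

/-- If `g` is a right `n`-Engel element of a group `G`, then `g⁻¹` is a left
`(n+1)`-Engel element of `G`. -/
theorem right_nEngel_inv_left_nsucc_engel {G : Type*} [Group G] (g : G) (n : ℕ)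
    (hn : 1 ≤ n) (hg : ∀ x : G, engel g x n = 1) :
    ∀ x : G, engel x g⁻¹ (n + 1) = 1 := by
  intro x
  obtain ⟨m, rfl⟩ : ∃ m, n = m + 1 := ⟨n - 1, by omega⟩
  -- key: `b := x⁻¹ g x` satisfies `engel b g⁻¹ (m+1) = 1`, by conjugating the hypothesis
  have key : engel (x⁻¹ * g * x) g⁻¹ (m + 1) = 1 := by
    have h2 := engel_conj g (x * g⁻¹ * x⁻¹) x (m + 1)
    rw [hg, show x⁻¹ * (x * g⁻¹ * x⁻¹) * x = g⁻¹ by group] at h2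
    rw [h2]; group
  rw [engel_succ_eq, engel_succ_eq]
  rw [show ((x⁻¹ * g⁻¹⁻¹ * x * g⁻¹)⁻¹ * g⁻¹⁻¹ * (x⁻¹ * g⁻¹⁻¹ * x * g⁻¹) * g⁻¹ : G)
      = g⁻¹⁻¹ * ((x⁻¹ * g * x)⁻¹ * g⁻¹⁻¹ * (x⁻¹ * g * x) * g⁻¹) * g⁻¹ by group]
  have h4 := engel_conj ((x⁻¹ * g * x)⁻¹ * g⁻¹⁻¹ * (x⁻¹ * g * x) * g⁻¹) g⁻¹ g⁻¹ m
  rw [show (g⁻¹⁻¹ * g⁻¹ * g⁻¹ : G) = g⁻¹ by group] at h4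
  rw [h4, ← engel_succ_eq, key]
  group
end

section
/- Let G be a group, H a subgroup isomorphic via ψ to a subgroup of G × G, and suppose x ∈ G is such that there exists y with ψ(y) = (k, 1) where k has order greater than 2^(m-1), and ψ([y,ₘ x]) has first coordinate k^(±2^(m-1)). Then [y,ₘ x] ≠ 1. (Abstract form of the key step showing a bounded left Engel element must be trivial.) -/
/-- Abstract key step: if `ψ : H → G × G` is an injective homomorphism,
`ψ(y) = (k, 1)` with the order of `k` greater than `2^(m-1)` (possibly
infinite), and `ψ([y,ₘ x])` has first coordinate `k^(±2^(m-1))`, then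
`[y,ₘ x] ≠ 1`. -/
theorem engel_ne_one_of_section {G : Type*} [Group G] (H : Subgroup G)
    (ψ : H →* G × G) (hψ : Function.Injective ψ) (x : G) (m : ℕ) (hm : 1 ≤ m)
    (y : H) (k : G) (hk : ψ y = (k, 1))
    (hord : orderOf k = 0 ∨ 2 ^ (m - 1) < orderOf k)
    (hmem : engel (y : G) x m ∈ H) (ε : ℤ)
    (hε : ε = 2 ^ (m - 1) ∨ ε = -(2 ^ (m - 1)))
    (hfirst : (ψ ⟨engel (y : G) x m, hmem⟩).1 = k ^ ε) :
    engel (y : G) x m ≠ 1 := by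
  intro h
  have h1 : (⟨engel (y : G) x m, hmem⟩ : H) = 1 := by
    ext; simpa using h
  rw [h1, map_one] at hfirst
  have hk1 : k ^ ε = 1 := hfirst.symm
  have hdvd : (orderOf k : ℤ) ∣ ε := orderOf_dvd_iff_zpow_eq_one.mpr hk1
  have habs : ε.natAbs = 2 ^ (m - 1) := by
    rcases hε with rfl | rfl <;> simp [Int.natAbs_pow]
  have hdvd' : orderOf k ∣ 2 ^ (m - 1) := by
    rw [← habs]; simpa using Int.natAbs_dvd_natAbs.mpr hdvd
  rcases hord with h0 | hlt
  · rw [h0] at hdvd'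
    exact absurd (zero_dvd_iff.mp hdvd') (by positivity)
  · exact absurd (Nat.le_of_dvd (by positivity) hdvd') (not_le.mpr hlt)
end
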